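/- Let I be a fractional ideal of O and ν ∈ ℤ^p with ν + ℕ^p ⊆ val(I). Then for every v ∈ ℤ^p: v ∈ val(I) if and only if inf(v, ν) ∈ val(I). In particular the set val(I) ∩ {v ∈ ℤ^p : v ≤ ν} determines val(I). -/

import Mathlib

open scoped Classical

set_option synthInstance.maxHeartbeats 1000000
set_option maxHeartbeats 1000000

noncomputable section

/-- `K`, the total ring of fractions: the product of `p` copies of the field of
formal Laurent series over `ℂ`. -/
abbrev KK (p : ℕ) : Type := Fin p → LaurentSeries ℂ

lemma algebraMap_component {p : ℕ} (c : ℂ) (i : Fin p) :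
    algebraMap ℂ (KK p) c i = HahnSeries.single (0:ℤ) c := by
  rw [Pi.algebraMap_apply, HahnSeries.algebraMap_apply', PowerSeries.algebraMap_apply,
      Algebra.algebraMap_self_apply, HahnSeries.ofPowerSeries_C, HahnSeries.C_apply]

lemma smul_eq_algebraMap_mul {p : ℕ} (c : ℂ) (x : KK p) :
    c • x = algebraMap ℂ (KK p) c * x := by
  funext i
  rw [Pi.smul_apply, Pi.mul_apply, algebraMap_component,
      HahnSeries.single_zero_mul_eq_smul]

/-- The `t`-adic order of a Laurent series, with `⊤` for the zero series. -/
def valC (g : LaurentSeries ℂ) : WithTop ℤ :=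
  if g = 0 then ⊤ else (g.order : WithTop ℤ)

/-- The value vector `val(g) = (val_1 g, …, val_p g)`. -/
def valVec {p : ℕ} (g : KK p) : Fin p → WithTop ℤ := fun i => valC (g i)

/-- The set `t^α·O~` of tuples of Laurent series whose `i`-th component has all
coefficients in degrees below `α i` equal to zero (equivalently, whose `i`-th
component has `t`-adic order at least `α i`), as a `ℂ`-submodule of `K`.
For `α = 0` this is `O~` itself. -/
def stdMod (p : ℕ) (α : Fin p → ℤ) : Submodule ℂ (KK p) where
  carrier := {g | ∀ i, ∀ j : ℤ, j < α i → (g i).coeff j = 0}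
  add_mem' := by
    intro a b ha hb i j hj
    simp [HahnSeries.coeff_add, ha i j hj, hb i j hj]
  zero_mem' := by
    intro i j hj
    simp
  smul_mem' := by
    intro c a ha i j hj
    simp [HahnSeries.coeff_smul, ha i j hj]

/-- The dual `S^∨ = {h ∈ K : h·S ⊆ O}` of a subset `S ⊆ K`, as a
`ℂ`-submodule of `K`. -/
def dualMod {p : ℕ} (O : Subalgebra ℂ (KK p)) (S : Set (KK p)) :
    Submodule ℂ (KK p) where
  carrier := {h | ∀ g ∈ S, h * g ∈ O}
  add_mem' := by
    intro a b ha hb g hg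
    simpa [add_mul] using add_mem (ha g hg) (hb g hg)
  zero_mem' := by
    intro g hg
    simpa using O.zero_mem
  smul_mem' := by
    intro c a ha g hg
    rw [smul_eq_algebraMap_mul, mul_assoc]
    exact O.mul_mem (O.algebraMap_mem c) (ha g hg)

/-- `val(S)`: values of the non-zerodivisors of `K` (elements all of whose
components are nonzero) belonging to `S`. -/
def vals {p : ℕ} (S : Set (KK p)) : Set (Fin p → ℤ) :=
  {v | ∃ g ∈ S, ∀ i, valC (g i) = (v i : WithTop ℤ)}

/-- `valbar(S)`: values of all elements of `S`. -/
def valsBar {p : ℕ} (S : Set (KK p)) : Set (Fin p → WithTop ℤ) :=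
  {v | ∃ g ∈ S, ∀ i, valC (g i) = v i}

/-- `I` is a fractional ideal of `O`: an `O`-stable `ℂ`-submodule of `K` which
is finitely generated over `O` and contains a non-zerodivisor of `K`. -/
def IsFracIdeal {p : ℕ} (O : Subalgebra ℂ (KK p)) (I : Submodule ℂ (KK p)) : Prop :=
  (∀ a ∈ O, ∀ x ∈ I, a * x ∈ I) ∧
  (∃ s : Finset (KK p), (↑s : Set (KK p)) ⊆ (I : Set (KK p)) ∧
    ∀ x ∈ I, ∃ a : KK p → KK p, (∀ g ∈ s, a g ∈ O) ∧ x = ∑ g ∈ s, a g * g) ∧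
  (∃ g ∈ I, ∀ i, g i ≠ 0)

/-- `Δ_i(v, M)`. -/
def DeltaI {p : ℕ} (i : Fin p) (v : Fin p → ℤ) (M : Set (Fin p → ℤ)) :
    Set (Fin p → ℤ) :=
  {α ∈ M | α i = v i ∧ ∀ j, j ≠ i → v j < α j}

/-- `Δ(v, M) = ⋃ i, Δ_i(v, M)`. -/
def DeltaSet {p : ℕ} (v : Fin p → ℤ) (M : Set (Fin p → ℤ)) : Set (Fin p → ℤ) :=
  ⋃ i : Fin p, DeltaI i v M

/-- `Λ_i(v, M)`. -/
def LamSet {p : ℕ} (i : Fin p) (v : Fin p → ℤ) (M : Set (Fin p → ℤ)) :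
    Set (Fin p → ℤ) :=
  {α ∈ M | α i = v i ∧ v ≤ α}

/-- `dim_ℂ (B / A)`: the dimension of the image of `B` in `K ⧸ A`
(which is canonically `B/(A ∩ B)`). -/
def qdim {p : ℕ} (A B : Submodule ℂ (KK p)) : ℕ :=
  Module.finrank ℂ ↥(B.map A.mkQ)

/-- `c_I(v) = dim_ℂ (I_v / I_{v+1})`, where `I_v = {g ∈ I : val g ≥ v}`. -/
def cI {p : ℕ} (I : Submodule ℂ (KK p)) (v : Fin p → ℤ) : ℕ :=
  qdim (I ⊓ stdMod p (v + 1)) (I ⊓ stdMod p v)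

/-- `α_I(v) = Σ_{J ⊆ {1,…,p}} (−1)^{p−|J|} c_I(v − e_J)`. -/
def alphaI {p : ℕ} (I : Submodule ℂ (KK p)) (v : Fin p → ℤ) : ℤ :=
  ∑ J : Finset (Fin p),
    (-1 : ℤ) ^ (p - J.card) * cI I (fun j => v j - if j ∈ J then 1 else 0)

/-- `O` itself, as a `ℂ`-submodule of `K`. -/
def algSubmodule {p : ℕ} (O : Subalgebra ℂ (KK p)) : Submodule ℂ (KK p) where
  carrier := O
  add_mem' := fun ha hb => O.add_mem ha hb
  zero_mem' := O.zero_mem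
  smul_mem' := fun c x hx => by
    rw [smul_eq_algebraMap_mul]
    exact O.mul_mem (O.algebraMap_mem c) hx

/-! For a generic scalar `c`, the orders of `g + c • h` are the componentwise minima of those
of `g` and `h`; hence `val(I)` is closed under `inf`, which gives one direction since
`ν ∈ val(I)`. Conversely, starting from `inf(v, ν)`, raise the coordinates below `v` one unit at
a time. At a coordinate `k` with `u k < v k`, hence `ν k ≤ u k`, the elements of `I` with order
`u k`, resp. `u k + 1`, at `k` and large orders elsewhere exist because these value vectors lie
above `ν`: subtracting a multiple of the first cancels the leading term at `k`, and adding a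
generic multiple of the second restores order exactly `u k + 1` there, leaving the other
coordinates unchanged. -/

namespace HahnSeries

variable {Γ F : Type*} [LinearOrder Γ] [Field F]

theorem orderTop_smul_of_ne_zero {c : F} (hc : c ≠ 0) (x : HahnSeries Γ F) :
    (c • x).orderTop = x.orderTop :=
  le_antisymm (by simpa [smul_smul, hc] using orderTop_le_orderTop_smul c⁻¹ (c • x))
    (orderTop_le_orderTop_smul c x)

theorem eventually_orderTop_add_smul_eq_min (x y : HahnSeries Γ F) :
    ∀ᶠ c : F in Filter.cofinite, (x + c • y).orderTop = min x.orderTop y.orderTop := by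
  rcases lt_trichotomy x.orderTop y.orderTop with hxy | hxy | hxy
  · refine Filter.Eventually.of_forall fun c => ?_
    rw [min_eq_left hxy.le]
    exact orderTop_add_eq_left (hxy.trans_le (orderTop_le_orderTop_smul c y))
  · obtain rfl | hx := eq_or_ne x 0
    · rw [orderTop_zero, eq_comm, orderTop_eq_top] at hxy
      simp [hxy]
    obtain ⟨a, ha⟩ := WithTop.ne_top_iff_exists.1 (orderTop_ne_top.2 hx)
    have hya : y.coeff a ≠ 0 := coeff_orderTop_ne (hxy ▸ ha.symm)
    filter_upwards [Filter.eventually_cofinite_ne (-(x.coeff a / y.coeff a))] with c hc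
    rw [← hxy, min_self]
    refine le_antisymm ?_ ?_
    · rw [← ha]
      apply orderTop_le_of_coeff_ne_zero
      rw [coeff_add, coeff_smul, smul_eq_mul]
      contrapose! hc
      field_simp
      linear_combination hc
    · calc x.orderTop = min x.orderTop y.orderTop := by rw [← hxy, min_self]
        _ ≤ min x.orderTop (c • y).orderTop := min_le_min_left _ (orderTop_le_orderTop_smul c y)
        _ ≤ _ := min_orderTop_le_orderTop_add
  · filter_upwards [Filter.eventually_cofinite_ne 0] with c hc
    rw [min_eq_right hxy.le, orderTop_add_eq_right ((orderTop_smul_of_ne_zero hc y).trans_lt hxy),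
      orderTop_smul_of_ne_zero hc]

theorem exists_lt_orderTop_sub_smul {x y : HahnSeries Γ F} {a : Γ} (hx : x.orderTop = a)
    (hy : y.orderTop = a) : ∃ c : F, a < (x - c • y).orderTop := by
  refine ⟨x.coeff a / y.coeff a, lt_of_le_of_ne ?_ (orderTop_ne_of_coeff_eq_zero ?_).symm⟩
  · calc (a : WithTop Γ) = min x.orderTop y.orderTop := by rw [hx, hy, min_self]
      _ ≤ min x.orderTop ((x.coeff a / y.coeff a) • y).orderTop :=
          min_le_min_left _ (orderTop_le_orderTop_smul _ y)
      _ ≤ _ := min_orderTop_le_orderTop_sub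
  · rw [coeff_sub, coeff_smul, smul_eq_mul, div_mul_cancel₀ _ (coeff_orderTop_ne hy), sub_self]

theorem exists_orderTop_add_smul_eq_min {ι : Type*} [Finite ι] [Infinite F]
    (x y : ι → HahnSeries Γ F) :
    ∃ c : F, ∀ i, (x i + c • y i).orderTop = min (x i).orderTop (y i).orderTop :=
  (Filter.eventually_all.2 fun i => eventually_orderTop_add_smul_eq_min (x i) (y i)).exists

end HahnSeries

theorem WithTop.coe_add_one_le_of_lt {a : ℤ} {x : WithTop ℤ} (h : (a : WithTop ℤ) < x) :
    ((a + 1 : ℤ) : WithTop ℤ) ≤ x := by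
  induction x with
  | top => exact le_top
  | coe m => exact WithTop.coe_le_coe.2 (Int.add_one_le_of_lt (WithTop.coe_lt_coe.1 h))

theorem valC_eq_orderTop (g : LaurentSeries ℂ) : valC g = g.orderTop := by
  unfold valC
  split_ifs with hg
  · rw [hg, HahnSeries.orderTop_zero]
  · rw [HahnSeries.order_eq_orderTop_of_ne_zero hg]

theorem mem_vals_iff {p : ℕ} {S : Set (KK p)} {v : Fin p → ℤ} :
    v ∈ vals S ↔ ∃ g ∈ S, ∀ i, (g i).orderTop = v i := by
  simp only [vals, Set.mem_ofPred_eq, valC_eq_orderTop]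

section Submodule

variable {p : ℕ} {I : Submodule ℂ (KK p)}

theorem inf_mem_vals {u w : Fin p → ℤ} (hu : u ∈ vals (I : Set (KK p)))
    (hw : w ∈ vals (I : Set (KK p))) : u ⊓ w ∈ vals (I : Set (KK p)) := by
  obtain ⟨g, hgI, hg⟩ := mem_vals_iff.1 hu
  obtain ⟨h, hhI, hh⟩ := mem_vals_iff.1 hw
  obtain ⟨c, hc⟩ := HahnSeries.exists_orderTop_add_smul_eq_min g h
  refine mem_vals_iff.2 ⟨g + c • h, I.add_mem hgI (I.smul_mem c hhI), fun i => ?_⟩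
  rw [Pi.add_apply, Pi.smul_apply, hc, hg, hh, Pi.inf_apply, WithTop.coe_min]

theorem update_add_one_mem_vals {ν : Fin p → ℤ}
    (hν : ∀ w : Fin p → ℤ, ν ≤ w → w ∈ vals (I : Set (KK p))) {u : Fin p → ℤ}
    (hu : u ∈ vals (I : Set (KK p))) {k : Fin p} (hk : ν k ≤ u k) :
    Function.update u k (u k + 1) ∈ vals (I : Set (KK p)) := by
  obtain ⟨g, hgI, hg⟩ := mem_vals_iff.1 hu
  set big : Fin p → ℤ := fun i => max (u i) (ν i) + 1
  have hν_big : ∀ m, ν k ≤ m → ν ≤ Function.update big k m := fun m hm =>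
    le_update_iff.2 ⟨hm, fun i _ => (le_max_right _ _).trans (Int.le_add_one le_rfl)⟩
  obtain ⟨h, hhI, hh⟩ := mem_vals_iff.1 (hν _ (hν_big (u k) hk))
  obtain ⟨h', hh'I, hh'⟩ := mem_vals_iff.1 (hν _ (hν_big (u k + 1) (by omega)))
  obtain ⟨c, hc⟩ := HahnSeries.exists_lt_orderTop_sub_smul (hg k) (by simpa using hh k)
  have hx : ∀ i ≠ k, (g i - c • h i).orderTop = u i := fun i hi => by
    rw [HahnSeries.orderTop_sub, hg i]
    refine lt_of_lt_of_le ?_ (HahnSeries.orderTop_le_orderTop_smul c (h i))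
    rw [hg i, hh i, Function.update_of_ne hi, WithTop.coe_lt_coe]
    exact (le_max_left _ _).trans_lt (lt_add_one _)
  obtain ⟨c', hc'⟩ := HahnSeries.exists_orderTop_add_smul_eq_min (g - c • h) h'
  refine mem_vals_iff.2 ⟨g - c • h + c' • h',
    I.add_mem (I.sub_mem hgI (I.smul_mem c hhI)) (I.smul_mem c' hh'I), fun i => ?_⟩
  rw [Pi.add_apply, Pi.smul_apply, hc', hh' i, Pi.sub_apply, Pi.smul_apply]
  rcases eq_or_ne i k with rfl | hi
  · rw [Function.update_self, Function.update_self]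
    exact min_eq_right (WithTop.coe_add_one_le_of_lt hc)
  · rw [hx i hi, Function.update_of_ne hi, Function.update_of_ne hi, ← WithTop.coe_min,
      min_eq_left ((le_max_left _ _).trans (Int.le_add_one le_rfl))]

theorem mem_vals_of_le_of_inf_le {ν : Fin p → ℤ}
    (hν : ∀ w : Fin p → ℤ, ν ≤ w → w ∈ vals (I : Set (KK p))) {u v : Fin p → ℤ}
    (hu : u ∈ vals (I : Set (KK p))) (huv : u ≤ v) (hvu : v ⊓ ν ≤ u) :
    v ∈ vals (I : Set (KK p)) := by
  obtain rfl | hne := eq_or_ne u v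
  · exact hu
  obtain ⟨k, hk⟩ : ∃ k, u k < v k := by
    by_contra! hvu'
    exact hne (le_antisymm huv hvu')
  have hνk : ν k ≤ u k := (inf_le_iff.1 (hvu k)).resolve_left hk.not_ge
  refine mem_vals_of_le_of_inf_le hν (update_add_one_mem_vals hν hu hνk)
    (update_le_iff.2 ⟨hk, fun i _ => huv i⟩)
    (le_update_iff.2 ⟨(hvu k).trans (Int.le_add_one le_rfl), fun i _ => hvu i⟩)
termination_by ∑ i, (v i - u i).toNat
decreasing_by
  refine Finset.sum_lt_sum (fun i _ => ?_) ⟨k, Finset.mem_univ k, ?_⟩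
  · rcases eq_or_ne i k with rfl | hi
    · rw [Function.update_self]
      omega
    · rw [Function.update_of_ne hi]
  · rw [Function.update_self]
    omega

end Submodule

theorem mem_vals_iff_inf_mem_general {p : ℕ}
    (I : Submodule ℂ (KK p))
    (ν : Fin p → ℤ) (hν : ∀ w : Fin p → ℤ, ν ≤ w → w ∈ vals (I : Set (KK p)))
    (v : Fin p → ℤ) :
    v ∈ vals (I : Set (KK p)) ↔ (fun i => min (v i) (ν i)) ∈ vals (I : Set (KK p)) :=
  ⟨fun hv => inf_mem_vals hv (hν ν le_rfl),
    fun hv => mem_vals_of_le_of_inf_le hν hv inf_le_left le_rfl⟩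

/-- `v ∈ val(I)` iff `inf(v, ν) ∈ val(I)`; in particular
`val(I) ∩ {v ≤ ν}` determines `val(I)`. -/
theorem mem_vals_iff_inf_mem {p : ℕ} (hp : 1 ≤ p) (O : Subalgebra ℂ (KK p))
    (hO : (O : Set (KK p)) ⊆ (stdMod p 0 : Set (KK p)))
    (I : Submodule ℂ (KK p)) (hI : IsFracIdeal O I)
    (ν : Fin p → ℤ) (hν : ∀ w : Fin p → ℤ, ν ≤ w → w ∈ vals (I : Set (KK p)))
    (v : Fin p → ℤ) :
    v ∈ vals (I : Set (KK p)) ↔ (fun i => min (v i) (ν i)) ∈ vals (I : Set (KK p)) :=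
  mem_vals_iff_inf_mem_general I ν hν v
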